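/- Under the assumptions of the outcome-regression identification (consistency, positivity of treatment assignment and of source inclusion 0 < π_S(X) < 1, unconfoundedness, survival mean exchangeability), the value function V(d) = E[y(T(d))] is also identified as V(d) = E[ (I_S / π_S(X)) · (1{A = d(X)} / π_d(X)) · E[y(T) | A = d(X), X, I_S = 1] ], where π_d(X) = d(X)π_A(X) + (1−d(X))(1−π_A(X)) and π_A(X) = P(A = 1 | X, I_S = 1). -/
import Mathlib


open MeasureTheory

open Filter

private lemma clamp_abs_le (t a : ℝ) (ha : 0 ≤ a) : |max (min t a) (-a)| ≤ a := by
  rw [abs_le]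
  exact ⟨le_max_right _ _, max_le (min_le_right _ _) (by linarith)⟩

private lemma clamp_abs_le_self (t a : ℝ) (ha : 0 ≤ a) : |max (min t a) (-a)| ≤ |t| := by
  rw [abs_le]
  constructor
  · exact (le_min (neg_abs_le t) (by linarith [abs_nonneg t])).trans (le_max_left _ _)
  · exact max_le ((min_le_left _ _).trans (le_abs_self t)) (by linarith [abs_nonneg t])

private lemma clamp_eq_self (t a : ℝ) (h : |t| ≤ a) : max (min t a) (-a) = t := by
  have h1 : t ≤ a := (le_abs_self t).trans h
  have h2 : -a ≤ t := by linarith [neg_abs_le t]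
  rw [min_eq_left h1, max_eq_left h2]

private lemma mul_clamp (c t a : ℝ) (hc : 0 ≤ c) :
    c * max (min t a) (-a) = max (min (c * t) (c * a)) (-(c * a)) := by
  rw [mul_max_of_nonneg _ _ hc, mul_min_of_nonneg _ _ hc, mul_neg]

private lemma div_mul_div_mul (a b i p m : ℝ) : (a/b)*(i/p)*m = a*i*(m/(b*p)) := by
  rw [div_eq_mul_inv, div_eq_mul_inv, div_eq_mul_inv, mul_inv]; ring

/-- Inverse-probability-weighted identification of the value of a decision
rule `d`: under consistency, positivity of treatment assignment and of source
inclusion, unconfoundedness and survival mean exchangeability,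
`V(d) = E[y(T(d))]
      = E[(I_S/π_S(X)) (1{A = d(X)}/π_d(X)) μ(d(X), X)]`,
where `π_d(X) = d(X)π_A(X) + (1−d(X))(1−π_A(X))` and
`μ(a,x) = E[y(T) | A = a, X = x, I_S = 1]` is represented by `m1, m0`. -/
theorem stmt3 {Ω 𝒳 : Type*} [MeasurableSpace Ω] [MeasurableSpace 𝒳]
    (μ : Measure Ω) [IsProbabilityMeasure μ]
    (X : Ω → 𝒳) (hX : Measurable X)
    (A IS : Ω → ℝ) (hAm : Measurable A) (hISm : Measurable IS)
    (hA01 : ∀ ω, A ω = 0 ∨ A ω = 1)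
    (hIS01 : ∀ ω, IS ω = 0 ∨ IS ω = 1)
    (yT yT1 yT0 : Ω → ℝ)
    (hyT1 : Integrable yT1 μ) (hyT0 : Integrable yT0 μ)
    -- consistency
    (hcons : ∀ ω, yT ω = A ω * yT1 ω + (1 - A ω) * yT0 ω)
    -- sampling score π_S(X) = P(I_S = 1 | X), with 0 < π_S(X) < 1 a.s.
    (πS : 𝒳 → ℝ) (hπSm : Measurable πS)
    (hπSpos : ∀ᵐ ω ∂μ, 0 < πS (X ω) ∧ πS (X ω) < 1)
    (hπSver : ∀ w : 𝒳 → ℝ, Measurable w →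
      Integrable (fun ω => (IS ω - πS (X ω)) * w (X ω)) μ →
      ∫ ω, (IS ω - πS (X ω)) * w (X ω) ∂μ = 0)
    -- propensity score π_A(X) = P(A = 1 | X, I_S = 1), with positivity
    (πA : 𝒳 → ℝ) (hπAm : Measurable πA)
    (hπApos : ∀ᵐ ω ∂μ, 0 < πA (X ω) ∧ πA (X ω) < 1)
    (hπAver : ∀ w : 𝒳 → ℝ, Measurable w →
      Integrable (fun ω => IS ω * w (X ω) * (A ω - πA (X ω))) μ →
      ∫ ω, IS ω * w (X ω) * (A ω - πA (X ω)) ∂μ = 0)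
    -- μ(a, x) = E[y(T) | A = a, X = x, I_S = 1]
    (m1 m0 : 𝒳 → ℝ) (hm1 : Measurable m1) (hm0 : Measurable m0)
    (hmu1 : ∀ w : 𝒳 → ℝ, Measurable w →
      Integrable (fun ω => IS ω * A ω * w (X ω) * (yT ω - m1 (X ω))) μ →
      ∫ ω, IS ω * A ω * w (X ω) * (yT ω - m1 (X ω)) ∂μ = 0)
    (hmu0 : ∀ w : 𝒳 → ℝ, Measurable w →
      Integrable (fun ω => IS ω * (1 - A ω) * w (X ω) * (yT ω - m0 (X ω))) μ →
      ∫ ω, IS ω * (1 - A ω) * w (X ω) * (yT ω - m0 (X ω)) ∂μ = 0)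
    -- unconfoundedness (conditional-mean level) and mean exchangeability
    (hunconf1 : ∀ w : 𝒳 → ℝ, Measurable w →
      Integrable (fun ω => IS ω * w (X ω) * (yT1 ω - m1 (X ω))) μ →
      ∫ ω, IS ω * w (X ω) * (yT1 ω - m1 (X ω)) ∂μ = 0)
    (hunconf0 : ∀ w : 𝒳 → ℝ, Measurable w →
      Integrable (fun ω => IS ω * w (X ω) * (yT0 ω - m0 (X ω))) μ →
      ∫ ω, IS ω * w (X ω) * (yT0 ω - m0 (X ω)) ∂μ = 0)
    (hexch1 : ∀ w : 𝒳 → ℝ, Measurable w →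
      Integrable (fun ω => w (X ω) * (yT1 ω - m1 (X ω))) μ →
      ∫ ω, w (X ω) * (yT1 ω - m1 (X ω)) ∂μ = 0)
    (hexch0 : ∀ w : 𝒳 → ℝ, Measurable w →
      Integrable (fun ω => w (X ω) * (yT0 ω - m0 (X ω))) μ →
      ∫ ω, w (X ω) * (yT0 ω - m0 (X ω)) ∂μ = 0)
    -- decision rule d : 𝒳 → {0, 1}
    (d : 𝒳 → ℝ) (hd : Measurable d) (hd01 : ∀ x, d x = 0 ∨ d x = 1)
    (hRHSint : Integrable (fun ω =>
      (IS ω / πS (X ω))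
        * ((if A ω = d (X ω) then (1 : ℝ) else 0)
            / (d (X ω) * πA (X ω) + (1 - d (X ω)) * (1 - πA (X ω))))
        * (d (X ω) * m1 (X ω) + (1 - d (X ω)) * m0 (X ω))) μ) :
    ∫ ω, (d (X ω) * yT1 ω + (1 - d (X ω)) * yT0 ω) ∂μ
      = ∫ ω, (IS ω / πS (X ω))
          * ((if A ω = d (X ω) then (1 : ℝ) else 0)
              / (d (X ω) * πA (X ω) + (1 - d (X ω)) * (1 - πA (X ω))))
          * (d (X ω) * m1 (X ω) + (1 - d (X ω)) * m0 (X ω)) ∂μ := by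
  classical
  -- abbreviations
  set M : 𝒳 → ℝ := fun x => d x * m1 x + (1 - d x) * m0 x with hM_def
  set pd : 𝒳 → ℝ := fun x => d x * πA x + (1 - d x) * (1 - πA x) with hpd_def
  set ind : Ω → ℝ := fun ω => if A ω = d (X ω) then (1:ℝ) else 0 with hind_def
  set g : Ω → ℝ := fun ω =>
      (IS ω / πS (X ω))
        * ((if A ω = d (X ω) then (1 : ℝ) else 0)
            / (d (X ω) * πA (X ω) + (1 - d (X ω)) * (1 - πA (X ω))))
        * (d (X ω) * m1 (X ω) + (1 - d (X ω)) * m0 (X ω)) with hg_def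
  have hgint : Integrable g μ := hRHSint
  -- measurability
  have hMm : Measurable M := by
    rw [hM_def]; exact (hd.mul hm1).add ((measurable_const.sub hd).mul hm0)
  have hpdm : Measurable pd := by
    rw [hpd_def]
    exact (hd.mul hπAm).add ((measurable_const.sub hd).mul (measurable_const.sub hπAm))
  have hindm : Measurable ind := by
    rw [hind_def]
    exact Measurable.ite (measurableSet_eq_fun hAm (hd.comp hX)) measurable_const measurable_const
  -- pointwise bounds
  have hISb : ∀ ω, 0 ≤ IS ω ∧ |IS ω| ≤ 1 := fun ω => by rcases hIS01 ω with h | h <;> norm_num [h]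
  have hindb : ∀ ω, 0 ≤ ind ω ∧ |ind ω| ≤ 1 := fun ω => by
    by_cases h : A ω = d (X ω) <;> simp [hind_def, h]
  have hdb : ∀ x, |d x| ≤ 1 ∧ |1 - d x| ≤ 1 := fun x => by rcases hd01 x with h | h <;> norm_num [h]
  -- a.e. facts
  have hae : ∀ᵐ ω ∂μ, 0 < πS (X ω) ∧ πS (X ω) < 1 ∧ 0 < pd (X ω) ∧ pd (X ω) ≤ 1
      ∧ |A ω - πA (X ω)| ≤ 1 := by
    filter_upwards [hπSpos, hπApos] with ω h1 h2
    refine ⟨h1.1, h1.2, ?_, ?_, ?_⟩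
    · rcases hd01 (X ω) with h | h <;> simp only [hpd_def, h] <;> norm_num <;>
        linarith [h2.1, h2.2]
    · rcases hd01 (X ω) with h | h <;> simp only [hpd_def, h] <;> norm_num <;>
        linarith [h2.1, h2.2]
    · rcases hA01 ω with h | h <;> rw [h, abs_le] <;> constructor <;> linarith [h2.1, h2.2]
  -- bounded a.e. implies integrable
  have Ibd : ∀ (f : Ω → ℝ) (C : ℝ), AEStronglyMeasurable f μ → (∀ᵐ ω ∂μ, |f ω| ≤ C) →
      Integrable f μ := by
    intro f C hf hC
    refine Integrable.mono' (integrable_const C) hf ?_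
    simpa [Real.norm_eq_abs] using hC
  -- the key verification identity for bounded weights
  have key : ∀ (c : 𝒳 → ℝ) (B : ℝ), Measurable c → (∀ x, |c x| ≤ B) →
      Integrable (fun ω => IS ω * ind ω * c (X ω)) μ ∧
      Integrable (fun ω => πS (X ω) * pd (X ω) * c (X ω)) μ ∧
      ∫ ω, IS ω * ind ω * c (X ω) ∂μ = ∫ ω, πS (X ω) * pd (X ω) * c (X ω) ∂μ := by
    intro c B hcm hcb
    have I1 : Integrable (fun ω => IS ω * ind ω * c (X ω)) μ := by
      refine Ibd _ B ((hISm.mul hindm).mul (hcm.comp hX)).aestronglyMeasurable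
        (Eventually.of_forall fun ω => ?_)
      rw [abs_mul, abs_mul]
      calc |IS ω| * |ind ω| * |c (X ω)| ≤ 1 * 1 * |c (X ω)| := by
            gcongr
            · exact (hISb ω).2
            · exact (hindb ω).2
        _ = |c (X ω)| := by ring
        _ ≤ B := hcb _
    have I2 : Integrable (fun ω => IS ω * pd (X ω) * c (X ω)) μ := by
      refine Ibd _ B ((hISm.mul (hpdm.comp hX)).mul (hcm.comp hX)).aestronglyMeasurable ?_
      filter_upwards [hae] with ω hω
      have hpda : |pd (X ω)| ≤ 1 := abs_le.mpr ⟨by linarith [hω.2.2.1], hω.2.2.2.1⟩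
      rw [abs_mul, abs_mul]
      calc |IS ω| * |pd (X ω)| * |c (X ω)| ≤ 1 * 1 * |c (X ω)| := by
            gcongr <;> first | exact (hISb ω).2 | exact hpda
        _ = |c (X ω)| := by ring
        _ ≤ B := hcb _
    have I3 : Integrable (fun ω => πS (X ω) * pd (X ω) * c (X ω)) μ := by
      refine Ibd _ B (((hπSm.comp hX).mul (hpdm.comp hX)).mul (hcm.comp hX)).aestronglyMeasurable
        ?_
      filter_upwards [hae] with ω hω
      have hSa : |πS (X ω)| ≤ 1 := abs_le.mpr ⟨by linarith [hω.1], hω.2.1.le⟩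
      have hpda : |pd (X ω)| ≤ 1 := abs_le.mpr ⟨by linarith [hω.2.2.1], hω.2.2.2.1⟩
      rw [abs_mul, abs_mul]
      calc |πS (X ω)| * |pd (X ω)| * |c (X ω)| ≤ 1 * 1 * |c (X ω)| := by
            gcongr <;> first | exact hSa | exact hpda
        _ = |c (X ω)| := by ring
        _ ≤ B := hcb _
    have eqA : ∀ ω, IS ω * ((2 * d (X ω) - 1) * c (X ω)) * (A ω - πA (X ω))
        = IS ω * ind ω * c (X ω) - IS ω * pd (X ω) * c (X ω) := by
      intro ω
      rcases hA01 ω with h | h <;> rcases hd01 (X ω) with h' | h' <;>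
        simp only [hind_def, hpd_def, h, h'] <;> norm_num <;> ring
    have intA : Integrable (fun ω => IS ω * ((2 * d (X ω) - 1) * c (X ω)) * (A ω - πA (X ω))) μ :=
      (I1.sub I2).congr (Eventually.of_forall fun ω => (eqA ω).symm)
    have hA0 := hπAver (fun x => (2 * d x - 1) * c x)
      (((measurable_const.mul hd).sub measurable_const).mul hcm) intA
    have hA1 : ∫ ω, (IS ω * ind ω * c (X ω) - IS ω * pd (X ω) * c (X ω)) ∂μ = 0 := by
      rw [← hA0]; exact integral_congr_ae (Eventually.of_forall fun ω => (eqA ω).symm)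
    rw [integral_sub I1 I2, sub_eq_zero] at hA1
    have eqS : ∀ ω, (IS ω - πS (X ω)) * (pd (X ω) * c (X ω))
        = IS ω * pd (X ω) * c (X ω) - πS (X ω) * pd (X ω) * c (X ω) := fun ω => by ring
    have intS : Integrable (fun ω => (IS ω - πS (X ω)) * (pd (X ω) * c (X ω))) μ :=
      (I2.sub I3).congr (Eventually.of_forall fun ω => (eqS ω).symm)
    have hS0 := hπSver (fun x => pd x * c x) (hpdm.mul hcm) intS
    have hS1 : ∫ ω, (IS ω * pd (X ω) * c (X ω) - πS (X ω) * pd (X ω) * c (X ω)) ∂μ = 0 := by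
      rw [← hS0]; exact integral_congr_ae (Eventually.of_forall fun ω => (eqS ω).symm)
    rw [integral_sub I2 I3, sub_eq_zero] at hS1
    exact ⟨I1, I3, hA1.trans hS1⟩
  -- rewriting g
  have hgeq : ∀ ω, g ω = IS ω * ind ω * (M (X ω) / (πS (X ω) * pd (X ω))) := by
    intro ω
    simp only [hg_def, hind_def, hpd_def, hM_def]
    exact div_mul_div_mul _ _ _ _ _
  -- Part (a): M ∘ X is integrable
  have hcAm : ∀ n : ℕ,
      Measurable (fun x => max (min (|M x| / (πS x * pd x)) (n:ℝ)) (-(n:ℝ))) := fun n =>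
    ((hMm.abs.div (hπSm.mul hpdm)).min measurable_const).max measurable_const
  have keyA := fun n : ℕ => key _ (n:ℝ) (hcAm n) (fun x => clamp_abs_le _ _ (Nat.cast_nonneg n))
  have bnd : ∀ n : ℕ, ∫ ω, πS (X ω) * pd (X ω)
      * (max (min (|M (X ω)| / (πS (X ω) * pd (X ω))) (n:ℝ)) (-(n:ℝ))) ∂μ
      ≤ ∫ ω, |g ω| ∂μ := by
    intro n
    rw [← (keyA n).2.2]
    refine integral_mono_ae (keyA n).1 hgint.abs ?_
    filter_upwards [hae] with ω hω
    obtain ⟨hS0, hS1, hpd0, hpd1, hA1⟩ := hω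
    have hc : 0 < πS (X ω) * pd (X ω) := mul_pos hS0 hpd0
    have hq0 : 0 ≤ |M (X ω)| / (πS (X ω) * pd (X ω)) := div_nonneg (abs_nonneg _) hc.le
    have h1 : max (min (|M (X ω)| / (πS (X ω) * pd (X ω))) (n:ℝ)) (-(n:ℝ))
        ≤ |M (X ω)| / (πS (X ω) * pd (X ω)) :=
      max_le (min_le_left _ _) (le_trans (neg_nonpos.mpr (Nat.cast_nonneg n)) hq0)
    have habsg : |g ω| = IS ω * ind ω * (|M (X ω)| / (πS (X ω) * pd (X ω))) := by
      rw [hgeq ω, abs_mul, abs_mul, abs_of_nonneg (hISb ω).1, abs_of_nonneg (hindb ω).1,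
        abs_div, abs_of_pos hc]
    rw [habsg]
    exact mul_le_mul_of_nonneg_left h1 (mul_nonneg (hISb ω).1 (hindb ω).1)
  have hMint : Integrable (fun ω => M (X ω)) μ := by
    refine ⟨(hMm.comp hX).aestronglyMeasurable, ?_⟩
    rw [hasFiniteIntegral_iff_norm]
    have hrw : ∀ᵐ ω ∂μ, ∀ n : ℕ, πS (X ω) * pd (X ω)
        * (max (min (|M (X ω)| / (πS (X ω) * pd (X ω))) (n:ℝ)) (-(n:ℝ)))
        = min (|M (X ω)|) ((n:ℝ) * (πS (X ω) * pd (X ω))) := by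
      filter_upwards [hae] with ω hω
      intro n
      obtain ⟨hS0, _, hpd0, _, _⟩ := hω
      have hc : 0 < πS (X ω) * pd (X ω) := mul_pos hS0 hpd0
      rw [mul_clamp _ _ _ hc.le, mul_comm (πS (X ω) * pd (X ω)) (|M (X ω)| / _),
        div_mul_cancel₀ _ hc.ne', max_eq_left, mul_comm]
      exact le_trans (neg_nonpos.mpr (mul_nonneg hc.le (Nat.cast_nonneg n)))
        (le_min (abs_nonneg _) (mul_nonneg hc.le (Nat.cast_nonneg n)))
    have haemeas : ∀ n : ℕ, AEMeasurable (fun ω => ENNReal.ofReal (πS (X ω) * pd (X ω)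
        * (max (min (|M (X ω)| / (πS (X ω) * pd (X ω))) (n:ℝ)) (-(n:ℝ))))) μ := fun n =>
      ((((hπSm.comp hX).mul (hpdm.comp hX)).mul ((hcAm n).comp hX)).ennreal_ofReal).aemeasurable
    have hmono : ∀ᵐ ω ∂μ, Monotone fun n : ℕ => ENNReal.ofReal (πS (X ω) * pd (X ω)
        * (max (min (|M (X ω)| / (πS (X ω) * pd (X ω))) (n:ℝ)) (-(n:ℝ)))) := by
      filter_upwards [hrw, hae] with ω h hω
      intro a b hab
      apply ENNReal.ofReal_le_ofReal
      rw [h a, h b]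
      refine min_le_min le_rfl ?_
      have hc : 0 ≤ πS (X ω) * pd (X ω) := (mul_pos hω.1 hω.2.2.1).le
      exact mul_le_mul_of_nonneg_right (by exact_mod_cast hab) hc
    have hlim : ∀ᵐ ω ∂μ, Tendsto (fun n : ℕ => ENNReal.ofReal (πS (X ω) * pd (X ω)
        * (max (min (|M (X ω)| / (πS (X ω) * pd (X ω))) (n:ℝ)) (-(n:ℝ))))) atTop
        (nhds (ENNReal.ofReal ‖M (X ω)‖)) := by
      filter_upwards [hrw, hae] with ω h hω
      obtain ⟨hS0, _, hpd0, _, _⟩ := hω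
      have hc : 0 < πS (X ω) * pd (X ω) := mul_pos hS0 hpd0
      apply tendsto_atTop_of_eventually_const
        (i₀ := ⌈|M (X ω)| / (πS (X ω) * pd (X ω))⌉₊)
      intro n hn
      rw [h n, Real.norm_eq_abs]
      congr 1
      rw [min_eq_left]
      have hd1 : |M (X ω)| / (πS (X ω) * pd (X ω)) ≤ (n:ℝ) :=
        le_trans (Nat.le_ceil _) (by exact_mod_cast hn)
      exact (div_le_iff₀ hc).mp hd1
    have htd := lintegral_tendsto_of_tendsto_of_monotone haemeas hmono hlim
    have hle : ∀ n : ℕ, ∫⁻ ω, ENNReal.ofReal (πS (X ω) * pd (X ω)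
        * (max (min (|M (X ω)| / (πS (X ω) * pd (X ω))) (n:ℝ)) (-(n:ℝ)))) ∂μ
        ≤ ENNReal.ofReal (∫ ω, |g ω| ∂μ) := by
      intro n
      have hnn : 0 ≤ᵐ[μ] fun ω => πS (X ω) * pd (X ω)
          * (max (min (|M (X ω)| / (πS (X ω) * pd (X ω))) (n:ℝ)) (-(n:ℝ))) := by
        filter_upwards [hrw, hae] with ω h hω
        rw [h n]
        exact le_min (abs_nonneg _)
          (mul_nonneg (Nat.cast_nonneg n) (mul_pos hω.1 hω.2.2.1).le)
      rw [← ofReal_integral_eq_lintegral_ofReal (keyA n).2.1 hnn]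
      exact ENNReal.ofReal_le_ofReal (bnd n)
    exact lt_of_le_of_lt (le_of_tendsto' htd hle) ENNReal.ofReal_lt_top
  -- Step 1: LHS = ∫ M ∘ X
  have hdM : ∀ ω, d (X ω) * m1 (X ω) = d (X ω) * M (X ω) := by
    intro ω; rcases hd01 (X ω) with h | h <;> simp only [hM_def, h] <;> ring
  have h1dM : ∀ ω, (1 - d (X ω)) * m0 (X ω) = (1 - d (X ω)) * M (X ω) := by
    intro ω; rcases hd01 (X ω) with h | h <;> simp only [hM_def, h] <;> ring
  have Idy1 : Integrable (fun ω => d (X ω) * yT1 ω) μ := by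
    refine Integrable.mono' hyT1.abs
      ((hd.comp hX).aestronglyMeasurable.mul hyT1.aestronglyMeasurable)
      (Eventually.of_forall fun ω => ?_)
    rw [Real.norm_eq_abs, abs_mul]
    nlinarith [(hdb (X ω)).1, abs_nonneg (yT1 ω), abs_nonneg (d (X ω))]
  have Idy0 : Integrable (fun ω => (1 - d (X ω)) * yT0 ω) μ := by
    refine Integrable.mono' hyT0.abs
      (((measurable_const.sub hd).comp hX).aestronglyMeasurable.mul hyT0.aestronglyMeasurable)
      (Eventually.of_forall fun ω => ?_)
    rw [Real.norm_eq_abs, abs_mul]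
    nlinarith [(hdb (X ω)).2, abs_nonneg (yT0 ω), abs_nonneg (1 - d (X ω))]
  have Idm1 : Integrable (fun ω => d (X ω) * m1 (X ω)) μ := by
    refine Integrable.mono' hMint.abs
      (((hd.comp hX).mul (hm1.comp hX))).aestronglyMeasurable (Eventually.of_forall fun ω => ?_)
    rw [Real.norm_eq_abs, hdM ω, abs_mul]
    nlinarith [(hdb (X ω)).1, abs_nonneg (M (X ω)), abs_nonneg (d (X ω))]
  have Idm0 : Integrable (fun ω => (1 - d (X ω)) * m0 (X ω)) μ := by
    refine Integrable.mono' hMint.abs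
      ((((measurable_const.sub hd).comp hX).mul (hm0.comp hX))).aestronglyMeasurable
      (Eventually.of_forall fun ω => ?_)
    rw [Real.norm_eq_abs, h1dM ω, abs_mul]
    nlinarith [(hdb (X ω)).2, abs_nonneg (M (X ω)), abs_nonneg (1 - d (X ω))]
  have e1int : Integrable (fun ω => d (X ω) * (yT1 ω - m1 (X ω))) μ :=
    (Idy1.sub Idm1).congr (Eventually.of_forall fun ω => by simp only [Pi.sub_apply]; ring)
  have e1 := hexch1 d hd e1int
  have e1' : ∫ ω, d (X ω) * yT1 ω ∂μ = ∫ ω, d (X ω) * m1 (X ω) ∂μ := by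
    have h0 : ∫ ω, (d (X ω) * yT1 ω - d (X ω) * m1 (X ω)) ∂μ = 0 := by
      rw [← e1]; exact integral_congr_ae (Eventually.of_forall fun ω => by ring)
    rw [integral_sub Idy1 Idm1, sub_eq_zero] at h0
    exact h0
  have e0int : Integrable (fun ω => (1 - d (X ω)) * (yT0 ω - m0 (X ω))) μ :=
    (Idy0.sub Idm0).congr (Eventually.of_forall fun ω => by simp only [Pi.sub_apply]; ring)
  have e0 := hexch0 (fun x => 1 - d x) (measurable_const.sub hd) e0int
  have e0' : ∫ ω, (1 - d (X ω)) * yT0 ω ∂μ = ∫ ω, (1 - d (X ω)) * m0 (X ω) ∂μ := by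
    have h0 : ∫ ω, ((1 - d (X ω)) * yT0 ω - (1 - d (X ω)) * m0 (X ω)) ∂μ = 0 := by
      rw [← e0]; exact integral_congr_ae (Eventually.of_forall fun ω => by ring)
    rw [integral_sub Idy0 Idm0, sub_eq_zero] at h0
    exact h0
  have step1 : ∫ ω, (d (X ω) * yT1 ω + (1 - d (X ω)) * yT0 ω) ∂μ = ∫ ω, M (X ω) ∂μ := by
    rw [integral_add Idy1 Idy0, e1', e0', ← integral_add Idm1 Idm0]
  -- Step 2: ∫ M ∘ X = ∫ g via truncation and dominated convergence
  have hcBm : ∀ n : ℕ,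
      Measurable (fun x => max (min (M x / (πS x * pd x)) (n:ℝ)) (-(n:ℝ))) := fun n =>
    ((hMm.div (hπSm.mul hpdm)).min measurable_const).max measurable_const
  have keyB := fun n : ℕ => key _ (n:ℝ) (hcBm n) (fun x => clamp_abs_le _ _ (Nat.cast_nonneg n))
  have T1 : Tendsto (fun n : ℕ => ∫ ω, πS (X ω) * pd (X ω)
      * (max (min (M (X ω) / (πS (X ω) * pd (X ω))) (n:ℝ)) (-(n:ℝ))) ∂μ) atTop
      (nhds (∫ ω, M (X ω) ∂μ)) := by
    refine tendsto_integral_of_dominated_convergence (fun ω => |M (X ω)|)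
      (fun n => (((hπSm.comp hX).mul (hpdm.comp hX)).mul
        ((hcBm n).comp hX)).aestronglyMeasurable) hMint.abs ?_ ?_
    · intro n
      filter_upwards [hae] with ω hω
      obtain ⟨hS0, _, hpd0, _, _⟩ := hω
      have hc : 0 < πS (X ω) * pd (X ω) := mul_pos hS0 hpd0
      rw [Real.norm_eq_abs, mul_clamp _ _ _ hc.le,
        mul_comm (πS (X ω) * pd (X ω)) (M (X ω) / _), div_mul_cancel₀ _ hc.ne']
      exact clamp_abs_le_self _ _ (mul_nonneg hc.le (Nat.cast_nonneg n))
    · filter_upwards [hae] with ω hω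
      obtain ⟨hS0, _, hpd0, _, _⟩ := hω
      have hc : 0 < πS (X ω) * pd (X ω) := mul_pos hS0 hpd0
      apply tendsto_atTop_of_eventually_const
        (i₀ := ⌈|M (X ω)| / (πS (X ω) * pd (X ω))⌉₊)
      intro n hn
      rw [mul_clamp _ _ _ hc.le, mul_comm (πS (X ω) * pd (X ω)) (M (X ω) / _),
        div_mul_cancel₀ _ hc.ne']
      apply clamp_eq_self
      have hd1 : |M (X ω)| / (πS (X ω) * pd (X ω)) ≤ (n:ℝ) :=
        le_trans (Nat.le_ceil _) (by exact_mod_cast hn)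
      rw [mul_comm]
      exact (div_le_iff₀ hc).mp hd1
  have T2 : Tendsto (fun n : ℕ => ∫ ω, IS ω * ind ω
      * (max (min (M (X ω) / (πS (X ω) * pd (X ω))) (n:ℝ)) (-(n:ℝ))) ∂μ) atTop
      (nhds (∫ ω, g ω ∂μ)) := by
    refine tendsto_integral_of_dominated_convergence (fun ω => |g ω|)
      (fun n => ((hISm.mul hindm).mul ((hcBm n).comp hX)).aestronglyMeasurable)
      hgint.abs ?_ ?_
    · intro n
      filter_upwards [hae] with ω hω
      have habsg : |g ω| = IS ω * ind ω * |M (X ω) / (πS (X ω) * pd (X ω))| := by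
        rw [hgeq ω, abs_mul, abs_mul, abs_of_nonneg (hISb ω).1, abs_of_nonneg (hindb ω).1]
      rw [Real.norm_eq_abs, habsg, abs_mul, abs_mul, abs_of_nonneg (hISb ω).1,
        abs_of_nonneg (hindb ω).1]
      exact mul_le_mul_of_nonneg_left (clamp_abs_le_self _ _ (Nat.cast_nonneg n))
        (mul_nonneg (hISb ω).1 (hindb ω).1)
    · filter_upwards [hae] with ω hω
      apply tendsto_atTop_of_eventually_const
        (i₀ := ⌈|M (X ω) / (πS (X ω) * pd (X ω))|⌉₊)
      intro n hn
      rw [hgeq ω]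
      congr 1
      exact clamp_eq_self _ _ (le_trans (Nat.le_ceil _) (by exact_mod_cast hn))
  have step2 : ∫ ω, M (X ω) ∂μ = ∫ ω, g ω ∂μ := by
    have T1' : Tendsto (fun n : ℕ => ∫ ω, IS ω * ind ω
        * (max (min (M (X ω) / (πS (X ω) * pd (X ω))) (n:ℝ)) (-(n:ℝ))) ∂μ) atTop
        (nhds (∫ ω, M (X ω) ∂μ)) :=
      Filter.Tendsto.congr (fun n => ((keyB n).2.2).symm) T1
    exact tendsto_nhds_unique T1' T2
  rw [step1, step2]
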